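/- (Theorem 3.1, optimizer equivalence.) Let r_1, …, r_k : T → ℝ be reward functions and let w ∈ ℝ^k satisfy w_i ≥ 0 for all i and Σ_{i=1}^k w_i = 1. Then a probability mass function π* on T minimizes the weighted Kullback–Leibler objective Σ_{i=1}^k w_i · D(π‖p_{r_i}) over all probability mass functions π on T if and only if π* maximizes the entropy-regularized return Σ_{τ ∈ T} π(τ)·(Σ_{i=1}^k w_i · r_i(τ)) − Σ_{τ : π(τ)>0} π(τ)·log(π(τ)/μ(τ)) over all probability mass functions π on T. -/

import Mathlib

open Real Finset

/-- Partition function `Z_r = ∑ τ, μ(τ) · exp(r(τ))`. -/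
noncomputable def Z {T : Type*} [Fintype T] (μ r : T → ℝ) : ℝ :=
  ∑ τ, μ τ * Real.exp (r τ)

/-- Gibbs distribution `p_r(τ) = μ(τ) · exp(r(τ)) / Z_r`. -/
noncomputable def gibbs {T : Type*} [Fintype T] (μ r : T → ℝ) : T → ℝ :=
  fun τ => μ τ * Real.exp (r τ) / Z μ r

/-- A probability mass function on a finite type: nonnegative and summing to 1. -/
def IsPMF {T : Type*} [Fintype T] (pi : T → ℝ) : Prop :=
  (∀ τ, 0 ≤ pi τ) ∧ ∑ τ, pi τ = 1

/-- Kullback–Leibler divergence `D(pi‖q) = ∑_{τ : pi(τ)>0} pi(τ) · log (pi(τ)/q(τ))`. -/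
noncomputable def KL {T : Type*} [Fintype T] (pi q : T → ℝ) : ℝ :=
  ∑ τ ∈ Finset.univ.filter (fun τ => 0 < pi τ), pi τ * Real.log (pi τ / q τ)

/-! Since `log (π / p_r) = log (π / μ) - r + log Z_r`, we get
`D(π‖p_r) = D(π‖μ) - E_π[r] + log Z_r` for every pmf `π` (with `D(π‖μ)` read literally for the
unnormalized `μ`). Averaging over `w`, the weighted KL objective is the constant
`∑ w_i log Z_{r_i}` minus the entropy-regularized return, so both have the same optimizers. -/

theorem IsPMF.nonempty {T : Type*} [Fintype T] {pi : T → ℝ} (hpi : IsPMF pi) : Nonempty T := by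
  by_contra hT
  rw [not_nonempty_iff] at hT
  simpa using hpi.2

theorem IsPMF.sum_filter_pos_mul {T : Type*} [Fintype T] {pi : T → ℝ} (hpi : IsPMF pi)
    (f : T → ℝ) : ∑ τ ∈ univ.filter (fun τ => 0 < pi τ), pi τ * f τ = ∑ τ, pi τ * f τ :=
  sum_filter_of_ne fun τ _ hτ => (hpi.1 τ).lt_of_ne' (left_ne_zero_of_mul hτ)

theorem Z_pos {T : Type*} [Fintype T] [Nonempty T] {μ : T → ℝ} (hμ : ∀ τ, 0 < μ τ)
    (r : T → ℝ) : 0 < Z μ r :=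
  sum_pos (fun τ _ => mul_pos (hμ τ) (exp_pos _)) univ_nonempty

theorem KL_gibbs_eq {T : Type*} [Fintype T] {μ pi : T → ℝ} (hμ : ∀ τ, 0 < μ τ)
    (hpi : IsPMF pi) (r : T → ℝ) :
    KL pi (gibbs μ r) = KL pi μ - ∑ τ, pi τ * r τ + log (Z μ r) := by
  have := hpi.nonempty
  have hZ := Z_pos hμ r
  have hlog : ∀ τ, 0 < pi τ →
      log (pi τ / gibbs μ r τ) = log (pi τ / μ τ) - r τ + log (Z μ r) := by
    intro τ hτ
    have hμτ := hμ τ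
    rw [gibbs, log_div, log_div, log_div, log_mul, log_exp] <;> try positivity
    ring
  calc KL pi (gibbs μ r)
      = ∑ τ ∈ univ.filter (fun τ => 0 < pi τ),
          (pi τ * log (pi τ / μ τ) - pi τ * r τ + pi τ * log (Z μ r)) :=
        sum_congr rfl fun τ hτ => by rw [hlog τ (mem_filter.1 hτ).2]; ring
    _ = KL pi μ - ∑ τ, pi τ * r τ + log (Z μ r) := by
        rw [sum_add_distrib, sum_sub_distrib, hpi.sum_filter_pos_mul r, ← sum_mul,
          sum_filter_of_ne fun τ _ => (hpi.1 τ).lt_of_ne', hpi.2, one_mul]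
        rfl

theorem sum_mul_KL_gibbs_eq {T ι : Type*} [Fintype T] [Fintype ι] {μ pi : T → ℝ}
    (hμ : ∀ τ, 0 < μ τ) (hpi : IsPMF pi) (r : ι → T → ℝ) {w : ι → ℝ} (hw : ∑ i, w i = 1) :
    ∑ i, w i * KL pi (gibbs μ (r i)) =
      ∑ i, w i * log (Z μ (r i)) - (∑ τ, pi τ * ∑ i, w i * r i τ - KL pi μ) := by
  have hswap : ∑ i, w i * ∑ τ, pi τ * r i τ = ∑ τ, pi τ * ∑ i, w i * r i τ := by
    simp_rw [mul_sum]
    rw [sum_comm]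
    exact sum_congr rfl fun τ _ => sum_congr rfl fun i _ => mul_left_comm _ _ _
  simp_rw [KL_gibbs_eq hμ hpi, mul_add, mul_sub, sum_add_distrib, sum_sub_distrib, ← sum_mul, hw,
    one_mul, hswap]
  ring

theorem weighted_kl_min_iff_entropy_regularized_max_general {T : Type*} [Fintype T]
    (μ : T → ℝ) (hμ : ∀ τ, 0 < μ τ)
    (k : ℕ) (r : Fin k → T → ℝ) (w : Fin k → ℝ)
    (hw1 : ∑ i, w i = 1)
    (pistar : T → ℝ) (hpistar : IsPMF pistar) :
    (∀ pi : T → ℝ, IsPMF pi →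
        ∑ i, w i * KL pistar (gibbs μ (r i)) ≤ ∑ i, w i * KL pi (gibbs μ (r i)))
    ↔
    (∀ pi : T → ℝ, IsPMF pi →
        (∑ τ, pi τ * (∑ i, w i * r i τ))
          - (∑ τ ∈ Finset.univ.filter (fun τ => 0 < pi τ), pi τ * Real.log (pi τ / μ τ))
        ≤ (∑ τ, pistar τ * (∑ i, w i * r i τ))
          - (∑ τ ∈ Finset.univ.filter (fun τ => 0 < pistar τ),
              pistar τ * Real.log (pistar τ / μ τ))) := by
  refine forall₂_congr fun pi hpi => ?_
  rw [sum_mul_KL_gibbs_eq hμ hpi r hw1, sum_mul_KL_gibbs_eq hμ hpistar r hw1,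
    sub_le_sub_iff_left]
  rfl

/-- Theorem 3.1 (optimizer equivalence): a pmf `pi*` minimizes the weighted KL objective
`∑ i, w i · D(pi‖p_{r i})` over all pmfs iff it maximizes the entropy-regularized return
`∑ τ, pi(τ)·(∑ i, w i · r i τ) − ∑_{τ : pi(τ)>0} pi(τ)·log(pi(τ)/μ(τ))` over all pmfs. -/
theorem weighted_kl_min_iff_entropy_regularized_max {T : Type*} [Fintype T] [Nonempty T]
    (μ : T → ℝ) (hμ : ∀ τ, 0 < μ τ)
    (k : ℕ) (r : Fin k → T → ℝ) (w : Fin k → ℝ)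
    (hw0 : ∀ i, 0 ≤ w i) (hw1 : ∑ i, w i = 1)
    (pistar : T → ℝ) (hpistar : IsPMF pistar) :
    (∀ pi : T → ℝ, IsPMF pi →
        ∑ i, w i * KL pistar (gibbs μ (r i)) ≤ ∑ i, w i * KL pi (gibbs μ (r i)))
    ↔
    (∀ pi : T → ℝ, IsPMF pi →
        (∑ τ, pi τ * (∑ i, w i * r i τ))
          - (∑ τ ∈ Finset.univ.filter (fun τ => 0 < pi τ), pi τ * Real.log (pi τ / μ τ))
        ≤ (∑ τ, pistar τ * (∑ i, w i * r i τ))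
          - (∑ τ ∈ Finset.univ.filter (fun τ => 0 < pistar τ),
              pistar τ * Real.log (pistar τ / μ τ))) :=
  weighted_kl_min_iff_entropy_regularized_max_general μ hμ k r w hw1 pistar hpistar
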